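/- arXiv:2110.03978 — 2 statements merged into one kernel-verified Lean document; each statement's English description precedes it below -/
import Mathlib

section
/- For every perfect matching M of a graph G, the forcing number f(G,M) is at least C(G,M), the maximum number of pairwise vertex-disjoint M-alternating cycles in G. -/
open SimpleGraph

/-- The generalized Petersen graph `GP(n,k)`: vertices `u i = Sum.inl i`,
`v i = Sum.inr i`, edges `u i -- u (i+k)`, `u i -- v i`, `v i -- v (i+1)` (mod n). -/
def GP (n k : ℕ) : SimpleGraph (Fin n ⊕ Fin n) :=
  SimpleGraph.fromRel (fun a b =>
    match a, b with
    | Sum.inl i, Sum.inl j => (j : ℕ) = ((i : ℕ) + k) % n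
    | Sum.inl i, Sum.inr j => i = j
    | Sum.inr i, Sum.inr j => (j : ℕ) = ((i : ℕ) + 1) % n
    | _, _ => False)

/-- `S` is a forcing set of the perfect matching `M` of `G`:
`S` consists of edges of `M` and `M` is the unique perfect matching containing `S`. -/
def IsForcingSet {V : Type*} (G : SimpleGraph V) (M : G.Subgraph) (S : Set (Sym2 V)) : Prop :=
  S ⊆ M.edgeSet ∧
    ∀ M' : G.Subgraph, M'.IsPerfectMatching → S ⊆ M'.edgeSet → M' = M

/-- The forcing number `f(G,M)`: minimum cardinality of a forcing set of `M`. -/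
noncomputable def forcingNum {V : Type*} (G : SimpleGraph V) (M : G.Subgraph) : ℕ :=
  sInf {k | ∃ S : Set (Sym2 V), IsForcingSet G M S ∧ S.ncard = k}

/-- A cycle `p` of `G` is `M`-alternating: its edges lie alternately in `M` and outside `M`.
For a perfect matching `M` this is equivalent to saying that every vertex of the
cycle is covered by an edge of `M` lying on the cycle. -/
def IsAltCycle {V : Type*} (G : SimpleGraph V) (M : G.Subgraph) {v : V} (p : G.Walk v v) : Prop :=
  p.IsCycle ∧ ∀ u ∈ p.support, ∃ e ∈ p.edges, e ∈ M.edgeSet ∧ u ∈ e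

/-- `C(G,M)`: the maximum number of pairwise vertex-disjoint `M`-alternating cycles of `G`. -/
noncomputable def maxDisjAltCycles {V : Type*} (G : SimpleGraph V) (M : G.Subgraph) : ℕ :=
  sSup {k | ∃ c : Fin k → Σ v : V, G.Walk v v,
    (∀ i, IsAltCycle G M (c i).2) ∧
    Pairwise fun i j => List.Disjoint (c i).2.support (c j).2.support}

/-!
If an `M`-alternating cycle `C` contained no edge of a forcing set `S`, switching `M` along `C`
would give a second perfect matching `M ∆ C` containing `S`. So every forcing set meets every
alternating cycle in an edge, and vertex-disjoint cycles are met in distinct edges.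
-/

open scoped symmDiff

section

variable {V : Type*} {G : SimpleGraph V} {M : G.Subgraph}

def SimpleGraph.Subgraph.switch (M : G.Subgraph) {u v : V} (p : G.Walk u v) : G.Subgraph :=
  G.toSubgraph (M.spanningCoe ∆ p.toSubgraph.spanningCoe)
    (symmDiff_le_sup.trans (sup_le M.spanningCoe_le p.toSubgraph.spanningCoe_le))

lemma SimpleGraph.Subgraph.edgeSet_switch {u v : V} (p : G.Walk u v) :
    (M.switch p).edgeSet = M.edgeSet ∆ p.edgeSet := by
  ext e
  induction e using Sym2.ind with
  | _ a b => simp [switch, symmDiff_def, Walk.adj_toSubgraph_iff_mem_edges]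

lemma IsAltCycle.isAlternating {v : V} {p : G.Walk v v} (hM : M.IsPerfectMatching)
    (hp : IsAltCycle G M p) : p.toSubgraph.spanningCoe.IsAlternating M.spanningCoe := by
  intro u w w' hww' hw hw'
  obtain ⟨e, hep, heM, hue⟩ := hp.2 u (p.mem_support_of_adj_toSubgraph hw)
  obtain ⟨z, rfl⟩ := Sym2.mem_iff_exists.mp hue
  have hz : p.toSubgraph.spanningCoe.Adj u z := p.mem_edges_toSubgraph.mpr hep
  have hzw : z = w ∨ z = w' := by
    by_contra! h
    exact hww' ((hp.1.isCycles_spanningCoe_toSubgraph.existsUnique_ne_adj hz).unique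
      ⟨h.1, hw⟩ ⟨h.2, hw'⟩)
  have hM_adj : ∀ y, M.Adj u y ↔ y = z :=
    fun y => ⟨fun h => hM.1.eq_of_adj_left h heM, by rintro rfl; exact heM⟩
  simp only [Subgraph.spanningCoe_adj, hM_adj]
  grind

lemma SimpleGraph.Subgraph.IsPerfectMatching.switch (hM : M.IsPerfectMatching) {v : V}
    {p : G.Walk v v} (hp : IsAltCycle G M p) : (M.switch p).IsPerfectMatching :=
  hM.symmDiff_of_isAlternating (hp.isAlternating hM) hp.1.isCycles_spanningCoe_toSubgraph

lemma IsAltCycle.switch_ne {v : V} {p : G.Walk v v} (hp : IsAltCycle G M p) : M.switch p ≠ M := by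
  intro h
  obtain ⟨e, hep, heM, -⟩ := hp.2 v p.start_mem_support
  have he := h ▸ heM
  simp [Subgraph.edgeSet_switch, Set.mem_symmDiff, heM, hep] at he

lemma IsForcingSet.exists_mem_edges {S : Set (Sym2 V)} (hS : IsForcingSet G M S)
    (hM : M.IsPerfectMatching) {v : V} {p : G.Walk v v} (hp : IsAltCycle G M p) :
    ∃ e ∈ S, e ∈ p.edges := by
  by_contra! h
  refine hp.switch_ne (hS.2 _ (hM.switch hp) fun e he => ?_)
  rw [Subgraph.edgeSet_switch]
  exact Or.inl ⟨hS.1 he, h e he⟩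

lemma isForcingSet_edgeSet (hM : M.IsPerfectMatching) : IsForcingSet G M M.edgeSet := by
  refine ⟨subset_rfl, fun M' hM' hsub => Subgraph.ext ?_ ?_⟩
  · rw [hM'.2.verts_eq_univ, hM.2.verts_eq_univ]
  · ext a b
    obtain ⟨z, hz, -⟩ := hM.1 (hM.2 a)
    have hz' : M'.Adj a z := hsub (Subgraph.mem_edgeSet.mpr hz)
    exact ⟨fun h => hM'.1.eq_of_adj_left hz' h ▸ hz, fun h => hsub (Subgraph.mem_edgeSet.mpr h)⟩

lemma le_ncard_of_pairwise_disjoint_of_exists_mem_edges {ι : Type*} {S : Set (Sym2 V)}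
    (hS : S.Finite) {c : ι → Σ v : V, G.Walk v v}
    (hdisj : Pairwise fun i j => List.Disjoint (c i).2.support (c j).2.support)
    (hmeet : ∀ i, ∃ e ∈ S, e ∈ (c i).2.edges) : Nat.card ι ≤ S.ncard := by
  choose e heS hec using hmeet
  have he : Function.Injective e := by
    intro i j hij
    by_contra hne
    have key : ∀ f : Sym2 V, f ∈ (c i).2.edges → f ∈ (c j).2.edges → False :=
      Sym2.ind fun a b hi hj => hdisj hne (Walk.fst_mem_support_of_mem_edges _ hi)
        (Walk.fst_mem_support_of_mem_edges _ hj)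
    exact key _ (hij ▸ hec i) (hec j)
  rw [← Set.ncard_range_of_injective he]
  exact Set.ncard_le_ncard (Set.range_subset_iff.mpr heS) hS
end

theorem stmt3 {V : Type*} [Fintype V] (G : SimpleGraph V) (M : G.Subgraph)
    (hM : M.IsPerfectMatching) :
    maxDisjAltCycles G M ≤ forcingNum G M := by
  refine le_csInf ⟨_, M.edgeSet, isForcingSet_edgeSet hM, rfl⟩ ?_
  rintro _ ⟨S, hS, rfl⟩
  refine csSup_le ⟨0, finZeroElim, finZeroElim, fun i => i.elim0⟩ ?_
  rintro k ⟨c, halt, hdisj⟩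
  simpa using le_ncard_of_pairwise_disjoint_of_exists_mem_edges S.toFinite hdisj
    fun i => hS.exists_mem_edges hM (halt i)
end

section
/- In the Petersen graph GP(5,2), no single edge of the all-spokes perfect matching M_6 = {u_iv_i : 0 ≤ i ≤ 4} is a forcing set of M_6; that is, f(GP(5,2), M_6) ≥ 2. -/
open SimpleGraph

/-!
The spokes form the perfect matching `v ↦ v.swap`. Rotating the perfect matching
`u₀v₀, u₁u₃, u₂u₄, v₁v₂, v₃v₄` by `i` gives a second perfect matching through the spoke `uᵢvᵢ`,
so neither the empty set nor a single spoke forces `M₆`. As `M₆` is a forcing set of itself,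
the infimum defining the forcing number is attained, hence it is at least `2`.
-/

namespace SimpleGraph

variable {V : Type*} {G : SimpleGraph V}

namespace Subgraph

theorem IsPerfectMatching.eq_of_edgeSet_subset {M M' : G.Subgraph} (hM : M.IsPerfectMatching)
    (hM' : M'.IsPerfectMatching) (h : M.edgeSet ⊆ M'.edgeSet) : M' = M := by
  have hle : ∀ {a b}, M.Adj a b → M'.Adj a b := fun hab =>
    Subgraph.mem_edgeSet.1 (h (Subgraph.mem_edgeSet.2 hab))
  ext a b
  · simp only [isSpanning_iff.1 hM.2, isSpanning_iff.1 hM'.2]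
  · refine ⟨fun hab => ?_, hle⟩
    obtain ⟨w, hw, -⟩ := hM.1 (hM.2 a)
    exact hM'.1.eq_of_adj_left hab (hle hw) ▸ hw

def ofInvolutive (σ : V → V) (hσ : Function.Involutive σ) (hadj : ∀ v, G.Adj v (σ v)) :
    G.Subgraph where
  verts := Set.univ
  Adj a b := σ a = b
  adj_sub := by rintro a _ rfl; exact hadj a
  edge_vert _ := Set.mem_univ _
  symm := ⟨by rintro a _ rfl; exact hσ a⟩

variable {σ τ : V → V} {hσ : Function.Involutive σ} {hτ : Function.Involutive τ}
  {hσG : ∀ v, G.Adj v (σ v)} {hτG : ∀ v, G.Adj v (τ v)}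

theorem isPerfectMatching_ofInvolutive : (ofInvolutive σ hσ hσG).IsPerfectMatching :=
  isPerfectMatching_iff.2 fun v => ⟨σ v, rfl, fun _ h => Eq.symm h⟩

theorem ofInvolutive_injective (h : ofInvolutive σ hσ hσG = ofInvolutive τ hτ hτG) : σ = τ :=
  funext fun v => by
    have hv : (ofInvolutive τ hτ hτG).Adj v (σ v) := by rw [← h]; rfl
    exact Eq.symm hv

end Subgraph

theorem not_isForcingSet_of_subset_edgeSet {M M' : G.Subgraph} {S : Set (Sym2 V)}
    (hM' : M'.IsPerfectMatching) (hS : S ⊆ M'.edgeSet) (hne : M' ≠ M) : ¬ IsForcingSet G M S :=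
  fun hforce => hne (hforce.2 M' hM' hS)

theorem two_le_forcingNum [Finite V] {M : G.Subgraph} (hM : M.IsPerfectMatching)
    (hnonempty : M.edgeSet.Nonempty)
    (hother : ∀ e ∈ M.edgeSet, ∃ M' : G.Subgraph, M'.IsPerfectMatching ∧ e ∈ M'.edgeSet ∧ M' ≠ M) :
    2 ≤ forcingNum G M := by
  have hforce : IsForcingSet G M M.edgeSet :=
    ⟨subset_rfl, fun M' hM' h => hM.eq_of_edgeSet_subset hM' h⟩
  obtain ⟨S, hS, hcard⟩ :=
    Nat.sInf_mem (s := {k | ∃ S, IsForcingSet G M S ∧ S.ncard = k}) ⟨_, M.edgeSet, hforce, rfl⟩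
  rw [forcingNum, ← hcard]
  by_contra! hlt
  obtain ⟨e, he⟩ := hnonempty
  obtain rfl | ⟨f, rfl⟩ : S = ∅ ∨ ∃ f, S = {f} := by
    interval_cases h : S.ncard
    · exact .inl ((Set.ncard_eq_zero S.toFinite).1 h)
    · exact .inr (Set.ncard_eq_one.1 h)
  · obtain ⟨M', hM', -, hne⟩ := hother e he
    exact not_isForcingSet_of_subset_edgeSet hM' (Set.empty_subset _) hne hS
  · obtain ⟨M', hM', hf, hne⟩ := hother f (hS.1 rfl)
    exact not_isForcingSet_of_subset_edgeSet hM' (Set.singleton_subset_iff.2 hf) hne hS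

instance (n k : ℕ) : DecidableRel (GP n k).Adj := fun a b => by
  rcases a with i | i <;> rcases b with j | j <;> simp only [GP, fromRel_adj] <;> infer_instance

def petersenRotate (i : Fin 5) : Fin 5 ⊕ Fin 5 → Fin 5 ⊕ Fin 5 := Sum.map (· + i) (· + i)

/-- The perfect matching `u₀v₀, u₁u₃, u₂u₄, v₁v₂, v₃v₄` of `GP(5,2)`; it shares only the spoke
`u₀v₀` with the spoke matching. -/
def spokeZeroInvolution : Fin 5 ⊕ Fin 5 → Fin 5 ⊕ Fin 5 :=
  Sum.elim ![.inr 0, .inl 3, .inl 4, .inl 1, .inl 2] ![.inl 0, .inr 2, .inr 1, .inr 4, .inr 3]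

def spokeInvolution (i : Fin 5) : Fin 5 ⊕ Fin 5 → Fin 5 ⊕ Fin 5 :=
  petersenRotate i ∘ spokeZeroInvolution ∘ petersenRotate (-i)

theorem spokeInvolution_involutive (i : Fin 5) : Function.Involutive (spokeInvolution i) := by
  intro v; revert i v; decide

theorem petersen_adj_spokeInvolution (i : Fin 5) (v : Fin 5 ⊕ Fin 5) :
    (GP 5 2).Adj v (spokeInvolution i v) := by
  revert i v; decide

theorem spokeInvolution_inl (i : Fin 5) : spokeInvolution i (.inl i) = .inr i := by
  revert i; decide

theorem spokeInvolution_ne_swap (i : Fin 5) : spokeInvolution i ≠ Sum.swap := by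
  revert i; decide

theorem petersen_adj_swap (v : Fin 5 ⊕ Fin 5) : (GP 5 2).Adj v v.swap := by
  revert v; decide

theorem exists_spoke_eq_iff (a b : Fin 5 ⊕ Fin 5) :
    (∃ i : Fin 5, s(a, b) = s((Sum.inl i : Fin 5 ⊕ Fin 5), Sum.inr i)) ↔ a.swap = b := by
  revert a b; decide

end SimpleGraph

theorem stmt8 (M₆ : (GP 5 2).Subgraph) (hv : M₆.verts = Set.univ)
    (he : M₆.edgeSet = {e | ∃ i : Fin 5, e = s((Sum.inl i : Fin 5 ⊕ Fin 5), Sum.inr i)}) :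
    (∀ e ∈ M₆.edgeSet, ¬ IsForcingSet (GP 5 2) M₆ {e}) ∧
    2 ≤ forcingNum (GP 5 2) M₆ := by
  have hM₆ : M₆ = Subgraph.ofInvolutive Sum.swap (fun v => v.swap_swap) petersen_adj_swap := by
    ext a b
    · rw [hv]
      rfl
    · change M₆.Adj a b ↔ a.swap = b
      rw [← Subgraph.mem_edgeSet, he, ← exists_spoke_eq_iff]
      rfl
  have hperfect : M₆.IsPerfectMatching := hM₆ ▸ Subgraph.isPerfectMatching_ofInvolutive
  have hother : ∀ e ∈ M₆.edgeSet,
      ∃ M' : (GP 5 2).Subgraph, M'.IsPerfectMatching ∧ e ∈ M'.edgeSet ∧ M' ≠ M₆ := by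
    rw [he]
    rintro _ ⟨i, rfl⟩
    refine ⟨Subgraph.ofInvolutive (spokeInvolution i) (spokeInvolution_involutive i)
      (petersen_adj_spokeInvolution i), Subgraph.isPerfectMatching_ofInvolutive,
      spokeInvolution_inl i, fun h => spokeInvolution_ne_swap i ?_⟩
    exact Subgraph.ofInvolutive_injective (h.trans hM₆)
  refine ⟨fun e he' hforce => ?_,
    two_le_forcingNum hperfect ⟨s(.inl 0, .inr 0), he ▸ ⟨0, rfl⟩⟩ hother⟩
  obtain ⟨M', hM', he'M', hne⟩ := hother e he'
  exact not_isForcingSet_of_subset_edgeSet hM' (Set.singleton_subset_iff.2 he'M') hne hforce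
end
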